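/- Let Z be as in the context. Then the function r ↦ 2·(r/(−Z'(r)·P̂(Z(r))))^{1/(m+1)}·Z(r), defined for r ∈ [−1,1] with r ≠ 0, extends to a real analytic function φ on an open interval containing [−1,1]. Moreover φ is an even function with φ(r) > 0 for all r ∈ (−1,1) and φ(1) = 0; φ satisfies (m+1)·r·Z(r)·φ'(r) + (m+1 − 2·Z(r))·φ(r) = 0 for all r ∈ [−1,1]; and φ'(1) = −2. -/

import Mathlib

/-!
Put `h(r) = -Z'(r) P̂(Z(r)) / r`. Since `Z'(0) = 0`, `h = -(dslope Z' 0) · (P̂ ∘ Z)` is analytic,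
with `h(0) = -Z''(0) P̂((m+1)/2) > 0`. On `[-1,1] \ {0}` the equation for `Z` gives
`h(r) = Q̂(Z(r)) / r²`, so `h` is even there, and `h > 0` because `Z' < 0` on `(0,1]` and
`P̂(x) = ∏ (1 - 2λᵢx/(m+1)) > 0` on `[0,(m+1)/2]`. Hence `h > 0` on an open interval around
`[-1,1]`, where `φ = 2 h^{-1/(m+1)} Z` is analytic. Away from `r = 0` the equation for `φ` is
equivalent to `r Z (Q̂ ∘ Z)' = (m+1)(r Z' + 1) (Q̂ ∘ Z)`, which follows from the equation for `Z`
and the identity `x Q̂'(x) = (m+1)(Q̂(x) - P̂(x))` obtained by differentiating `x^{m+1} Q(1/x)`.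
-/

open Polynomial Set Filter
open scoped Topology

lemma AnalyticAt.rpow_const {f : ℝ → ℝ} {x : ℝ} (c : ℝ) (hf : AnalyticAt ℝ f x) (hx : 0 < f x) :
    AnalyticAt ℝ (fun t => f t ^ c) x := by
  refine ((hf.log hx).mul (analyticAt_const (v := c))).rexp'.congr ?_
  filter_upwards [hf.continuousAt.eventually (lt_mem_nhds hx)] with t ht
  exact (Real.rpow_def_of_pos ht c).symm

lemma AnalyticAt.dslope {𝕜 E : Type*} [NontriviallyNormedField 𝕜] [NormedAddCommGroup E]
    [NormedSpace 𝕜 E] {f : 𝕜 → E} {a b : 𝕜} (ha : AnalyticAt 𝕜 f a) (hb : AnalyticAt 𝕜 f b) :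
    AnalyticAt 𝕜 (dslope f a) b := by
  rcases eq_or_ne b a with rfl | hba
  · obtain ⟨p, hp⟩ := ha
    exact hp.has_fpower_series_dslope_fslope.analyticAt
  · have hslope : AnalyticAt 𝕜 (fun t => (t - a)⁻¹ • (f t - f a)) b :=
      ((analyticAt_id.sub analyticAt_const).inv (sub_ne_zero.2 hba)).smul
        (hb.sub analyticAt_const)
    refine hslope.congr ?_
    filter_upwards [eventually_ne_nhds hba] with t ht
    rw [dslope_of_ne _ ht, slope_def_module]

lemma exists_Ioo_subset_of_Icc_subset {U : Set ℝ} {a b : ℝ} (hU : IsOpen U) (hab : a ≤ b)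
    (hsub : Icc a b ⊆ U) : ∃ c < a, ∃ d, b < d ∧ Ioo c d ⊆ U := by
  obtain ⟨c, hc, hcU⟩ :=
    exists_Ioc_subset_of_mem_nhds (hU.mem_nhds (hsub ⟨le_rfl, hab⟩)) ⟨a - 1, by linarith⟩
  obtain ⟨d, hd, hdU⟩ :=
    exists_Ico_subset_of_mem_nhds (hU.mem_nhds (hsub ⟨hab, le_rfl⟩)) ⟨b + 1, by linarith⟩
  refine ⟨c, hc, d, hd, fun t ht => ?_⟩
  rcases lt_or_ge t a with hta | hta
  · exact hcU ⟨ht.1, hta.le⟩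
  rcases le_or_gt t b with htb | htb
  · exact hsub ⟨hta, htb⟩
  · exact hdU ⟨htb.le, ht.2⟩

lemma eval_eq_prod_one_sub_mul_of_reflect {n : ℕ} (a : Fin n → ℝ) {Phat : ℝ[X]}
    (hPhat : ∀ x : ℝ, x ≠ 0 → Phat.eval x = x ^ n * (∏ i, (X - C (a i))).eval (1 / x))
    (x : ℝ) : Phat.eval x = ∏ i, (1 - a i * x) := by
  have hcont : Continuous fun x : ℝ => ∏ i, (1 - a i * x) := by fun_prop
  refine congrFun (Continuous.ext_on (dense_compl_singleton 0) Phat.continuous hcont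
    fun y hy => ?_) x
  rw [hPhat y hy, eval_prod, ← Fin.prod_const, ← Finset.prod_mul_distrib]
  refine Finset.prod_congr rfl fun i _ => ?_
  simp only [eval_sub, eval_X, eval_C]
  field_simp [show y ≠ 0 from hy]

lemma prod_one_sub_pos {n : ℕ} {lam : Fin n → ℝ} (hlt : ∀ i, lam i < 1) {M x : ℝ} (hM : 0 < M)
    (hx : x ∈ Icc 0 (M / 2)) : 0 < ∏ i, (1 - 2 * lam i / M * x) := by
  refine Finset.prod_pos fun i _ => ?_
  have ht : 2 * x / M ∈ Icc (0 : ℝ) 1 :=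
    ⟨by have := hx.1; positivity, (div_le_one hM).2 (by linarith [hx.2])⟩
  rw [show 2 * lam i / M * x = lam i * (2 * x / M) by ring, sub_pos]
  rcases le_or_gt (lam i) 0 with hl | hl
  · linarith [mul_nonpos_of_nonpos_of_nonneg hl ht.1]
  · linarith [mul_le_of_le_one_right hl.le ht.2, hlt i]

lemma HasDerivAt.inv_rpow_mul {h Z : ℝ → ℝ} {h' z' c r : ℝ} (hh : HasDerivAt h h' r)
    (hZ : HasDerivAt Z z' r) (hpos : 0 < h r) :
    HasDerivAt (fun t => (h t)⁻¹ ^ c * Z t) ((h r)⁻¹ ^ c * (z' - c * Z r * h' / h r)) r := by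
  refine (((hh.inv hpos.ne').rpow_const (p := c) (Or.inl (inv_ne_zero hpos.ne'))).mul
    hZ).congr_deriv ?_
  simp only [Pi.inv_apply]
  rw [Real.rpow_sub_one (inv_ne_zero hpos.ne')]
  field_simp
  ring

lemma deriv_two_mul_inv_rpow_mul_of_eq_zero {h Z : ℝ → ℝ} {c r : ℝ} (hh : DifferentiableAt ℝ h r)
    (hZ : DifferentiableAt ℝ Z r) (hpos : 0 < h r) (hZr : Z r = 0) :
    deriv (fun t => 2 * (h t)⁻¹ ^ c * Z t) r = 2 * (h r)⁻¹ ^ c * deriv Z r := by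
  have hφ := (hh.hasDerivAt.inv_rpow_mul hZ.hasDerivAt hpos (c := c)).const_mul 2
  simp only [← mul_assoc] at hφ
  rw [hφ.deriv, hZr]
  ring

lemma mul_eval_derivative_eq_of_reflect {m : ℕ} (hm : 1 ≤ m) {P Q Phat Qhat : ℝ[X]}
    (hQder : ∀ y : ℝ, (derivative Q).eval y = ((m : ℝ) + 1) * y * P.eval y)
    (hPhat : ∀ x : ℝ, x ≠ 0 → Phat.eval x = x ^ (m - 1) * P.eval (1 / x))
    (hQhat : ∀ x : ℝ, x ≠ 0 → Qhat.eval x = x ^ (m + 1) * Q.eval (1 / x)) {x : ℝ} (hx : x ≠ 0) :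
    x * (derivative Qhat).eval x = ((m : ℝ) + 1) * (Qhat.eval x - Phat.eval x) := by
  have hQ : HasDerivAt (fun t : ℝ => Q.eval t⁻¹) ((derivative Q).eval x⁻¹ * -(x ^ 2)⁻¹) x :=
    (Q.hasDerivAt x⁻¹).comp x (hasDerivAt_inv hx)
  have hQhat' : HasDerivAt (fun t => Qhat.eval t)
      (((m + 1 : ℕ) : ℝ) * x ^ m * Q.eval x⁻¹ + x ^ (m + 1) * ((derivative Q).eval x⁻¹ * -(x ^ 2)⁻¹))
      x := by
    refine ((hasDerivAt_pow (m + 1) x).mul hQ).congr_of_eventuallyEq ?_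
    filter_upwards [eventually_ne_nhds hx] with t ht
    rw [hQhat t ht, one_div]
    rfl
  obtain ⟨k, rfl⟩ : ∃ k, m = k + 1 := ⟨m - 1, by omega⟩
  rw [← Polynomial.deriv, hQhat'.deriv, hQhat x hx, hPhat x hx, hQder, one_div]
  push_cast
  field_simp
  ring

lemma ode_of_eventuallyEq_div_sq {M r F' z' : ℝ} {h F Z : ℝ → ℝ} (hM : M ≠ 0) (hr : r ≠ 0)
    (hhF : h =ᶠ[𝓝 r] fun t => F t / t ^ 2) (hF : HasDerivAt F F' r) (hZ : HasDerivAt Z z' r)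
    (hpos : 0 < h r) (hlog : r * Z r * F' = M * (r * z' + 1) * F r) :
    M * r * Z r * deriv (fun t => 2 * (h t)⁻¹ ^ (1 / M) * Z t) r
      + (M - 2 * Z r) * (2 * (h r)⁻¹ ^ (1 / M) * Z r) = 0 := by
  have hh : HasDerivAt h ((F' * r ^ 2 - F r * (2 * r)) / (r ^ 2) ^ 2) r := by
    refine (hF.div (d := fun t => t ^ 2) ?_ (pow_ne_zero 2 hr)).congr_of_eventuallyEq hhF
    simpa using hasDerivAt_pow 2 r
  have hφ := (hh.inv_rpow_mul hZ hpos (c := 1 / M)).const_mul 2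
  simp only [← mul_assoc] at hφ
  rw [hφ.deriv]
  have hFr : h r = F r / r ^ 2 := hhF.self_of_nhds
  have hFne : F r ≠ 0 := fun h0 => by simp [hFr, h0] at hpos
  generalize (h r)⁻¹ ^ (1 / M) = B
  rw [hFr]
  field_simp
  linear_combination (-2 * B * Z r) * hlog

lemma mapsTo_Icc_of_mem_Ioo {Z : ℝ → ℝ} {R : ℝ} (hR : 0 ≤ R) (hZ1 : Z 1 = 0)
    (hZeven : ∀ r ∈ Icc (-1 : ℝ) 1, Z (-r) = Z r) (hZ0 : Z 0 = R)
    (hZrange : ∀ r ∈ Ioo (-1 : ℝ) 1, r ≠ 0 → Z r ∈ Ioo 0 R) :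
    MapsTo Z (Icc (-1) 1) (Icc 0 R) := by
  intro r hr
  rcases eq_or_ne r 0 with rfl | hr0
  · simp [hZ0, hR]
  rcases hr.2.eq_or_lt with rfl | hr1
  · simp [hZ1, hR]
  rcases hr.1.eq_or_lt with rfl | hr1'
  · simp [hZeven 1 (by norm_num), hZ1, hR]
  exact Ioo_subset_Icc_self (hZrange r ⟨hr1', hr1⟩ hr0)

noncomputable def slopeWeight (Phat : ℝ[X]) (Z : ℝ → ℝ) (r : ℝ) : ℝ :=
  -dslope (deriv Z) 0 r * Phat.eval (Z r)

section slopeWeight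

variable {Phat Qhat : ℝ[X]} {Z : ℝ → ℝ}

lemma slopeWeight_zero : slopeWeight Phat Z 0 = -deriv (deriv Z) 0 * Phat.eval (Z 0) := by
  rw [slopeWeight, dslope_same]

lemma slopeWeight_of_ne_zero (hZ'0 : deriv Z 0 = 0) {r : ℝ} (hr : r ≠ 0) :
    slopeWeight Phat Z r = -deriv Z r * Phat.eval (Z r) / r := by
  rw [slopeWeight, dslope_of_ne _ hr, slope_def_field, hZ'0]
  ring

lemma slopeWeight_eq_div_sq (hZ'0 : deriv Z 0 = 0)
    (hODE : ∀ r ∈ Icc (-1 : ℝ) 1, r * deriv Z r * Phat.eval (Z r) + Qhat.eval (Z r) = 0)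
    {r : ℝ} (hr : r ∈ Icc (-1 : ℝ) 1) (hr0 : r ≠ 0) :
    slopeWeight Phat Z r = Qhat.eval (Z r) / r ^ 2 := by
  rw [slopeWeight_of_ne_zero hZ'0 hr0, eq_div_iff (pow_ne_zero 2 hr0)]
  field_simp
  linear_combination -hODE r hr

lemma AnalyticOnNhd.slopeWeight {s : Set ℝ} (hZ : AnalyticOnNhd ℝ Z s) (h0 : 0 ∈ s) :
    AnalyticOnNhd ℝ (slopeWeight Phat Z) s := fun r hr =>
  ((hZ.deriv 0 h0).dslope (hZ.deriv r hr)).neg.mul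
    ((AnalyticOnNhd.eval_polynomial Phat _ (mem_univ _)).comp (hZ r hr))

lemma slopeWeight_neg (hZ'0 : deriv Z 0 = 0)
    (hODE : ∀ r ∈ Icc (-1 : ℝ) 1, r * deriv Z r * Phat.eval (Z r) + Qhat.eval (Z r) = 0)
    (hZeven : ∀ r ∈ Icc (-1 : ℝ) 1, Z (-r) = Z r) {r : ℝ} (hr : r ∈ Icc (-1 : ℝ) 1) :
    slopeWeight Phat Z (-r) = slopeWeight Phat Z r := by
  rcases eq_or_ne r 0 with rfl | hr0
  · rw [neg_zero]
  have hr' : -r ∈ Icc (-1 : ℝ) 1 := ⟨by linarith [hr.2], by linarith [hr.1]⟩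
  rw [slopeWeight_eq_div_sq hZ'0 hODE hr' (neg_ne_zero.2 hr0),
    slopeWeight_eq_div_sq hZ'0 hODE hr hr0, hZeven r hr, neg_sq]

lemma slopeWeight_pos (hZ'0 : deriv Z 0 = 0)
    (hODE : ∀ r ∈ Icc (-1 : ℝ) 1, r * deriv Z r * Phat.eval (Z r) + Qhat.eval (Z r) = 0)
    (hZeven : ∀ r ∈ Icc (-1 : ℝ) 1, Z (-r) = Z r) (hZ' : ∀ r ∈ Ioc (0 : ℝ) 1, deriv Z r < 0)
    (hZ''0 : deriv (deriv Z) 0 < 0) (hPpos : ∀ r ∈ Icc (-1 : ℝ) 1, 0 < Phat.eval (Z r))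
    {r : ℝ} (hr : r ∈ Icc (-1 : ℝ) 1) : 0 < slopeWeight Phat Z r := by
  wlog hr0 : 0 ≤ r generalizing r
  · rw [← slopeWeight_neg hZ'0 hODE hZeven hr]
    exact this ⟨by linarith [hr.2], by linarith [hr.1]⟩ (by linarith)
  rcases hr0.eq_or_lt with rfl | hr0
  · rw [slopeWeight_zero]
    exact mul_pos (neg_pos.2 hZ''0) (hPpos 0 hr)
  · rw [slopeWeight_of_ne_zero hZ'0 hr0.ne']
    exact div_pos (mul_pos (neg_pos.2 (hZ' r ⟨hr0, hr.2⟩)) (hPpos r hr)) hr0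

end slopeWeight

lemma slopeWeight_ode {m : ℕ} (hm : 1 ≤ m) {P Q Phat Qhat : ℝ[X]} {Z : ℝ → ℝ}
    (hQder : ∀ y : ℝ, (derivative Q).eval y = ((m : ℝ) + 1) * y * P.eval y)
    (hPhat : ∀ x : ℝ, x ≠ 0 → Phat.eval x = x ^ (m - 1) * P.eval (1 / x))
    (hQhat : ∀ x : ℝ, x ≠ 0 → Qhat.eval x = x ^ (m + 1) * Q.eval (1 / x))
    (hODE : ∀ r ∈ Icc (-1 : ℝ) 1, r * deriv Z r * Phat.eval (Z r) + Qhat.eval (Z r) = 0)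
    (hZ1 : Z 1 = 0) (hZeven : ∀ r ∈ Icc (-1 : ℝ) 1, Z (-r) = Z r)
    (hZ0 : Z 0 = ((m : ℝ) + 1) / 2) (hZ'0 : deriv Z 0 = 0)
    {r : ℝ} (hr : r ∈ Icc (-1 : ℝ) 1) (hZd : HasDerivAt Z (deriv Z r) r)
    (hpos : 0 < slopeWeight Phat Z r) :
    ((m : ℝ) + 1) * r * Z r *
        deriv (fun t => 2 * (slopeWeight Phat Z t)⁻¹ ^ (1 / ((m : ℝ) + 1)) * Z t) r +
      ((m : ℝ) + 1 - 2 * Z r) * (2 * (slopeWeight Phat Z r)⁻¹ ^ (1 / ((m : ℝ) + 1)) * Z r) = 0 := by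
  rcases eq_or_ne r 0 with rfl | hr0
  · rw [hZ0]; ring
  rcases eq_or_ne (Z r) 0 with hZr | hZr
  · simp [hZr]
  have hr' : r ∈ Ioo (-1 : ℝ) 1 := ⟨hr.1.lt_of_ne fun h => hZr (by simp [← h, hZeven 1, hZ1]),
    hr.2.lt_of_ne fun h => hZr (by rw [h, hZ1])⟩
  refine ode_of_eventuallyEq_div_sq (F := fun t => Qhat.eval (Z t)) (by positivity) hr0 ?_
    ((Qhat.hasDerivAt (Z r)).comp r hZd) hZd hpos ?_
  · filter_upwards [Ioo_mem_nhds hr'.1 hr'.2, eventually_ne_nhds hr0] with t ht ht0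
    exact slopeWeight_eq_div_sq hZ'0 hODE (Ioo_subset_Icc_self ht) ht0
  · linear_combination r * deriv Z r * mul_eval_derivative_eq_of_reflect hm hQder hPhat hQhat hZr
      - ((m : ℝ) + 1) * hODE r hr

theorem stmt_13_general (m : ℕ) (hm : 2 ≤ m)
    (lam : Fin (m - 1) → ℝ) (hlt : ∀ i, lam i < 1)
    (P Q Phat Qhat : Polynomial ℝ)
    (hP : P = ∏ i : Fin (m - 1), (X - C (2 * lam i / ((m : ℝ) + 1))))
    (hQder : ∀ y : ℝ, (derivative Q).eval y = ((m : ℝ) + 1) * y * P.eval y)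
    (hPhat : ∀ x : ℝ, x ≠ 0 → Phat.eval x = x ^ (m - 1) * P.eval (1 / x))
    (hQhat : ∀ x : ℝ, x ≠ 0 → Qhat.eval x = x ^ (m + 1) * Q.eval (1 / x))
    (Z : ℝ → ℝ)
    (hZan : ∃ c d : ℝ, c < -1 ∧ 1 < d ∧ AnalyticOnNhd ℝ Z (Ioo c d))
    (hODE : ∀ r ∈ Icc (-1 : ℝ) 1,
      r * deriv Z r * Phat.eval (Z r) + Qhat.eval (Z r) = 0)
    (hZ1 : Z 1 = 0)
    (hZeven : ∀ r ∈ Icc (-1 : ℝ) 1, Z (-r) = Z r)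
    (hZ0 : Z 0 = ((m : ℝ) + 1) / 2)
    (hZ'0 : deriv Z 0 = 0)
    (hZ' : ∀ r ∈ Ioc (0 : ℝ) 1, deriv Z r < 0)
    (hZ'1 : deriv Z 1 = -1)
    (hZ''0 : deriv (deriv Z) 0 < 0)
    (hZrange : ∀ r ∈ Ioo (-1 : ℝ) 1, r ≠ 0 → Z r ∈ Ioo (0 : ℝ) (((m : ℝ) + 1) / 2)) :
    ∃ φ : ℝ → ℝ,
      (∃ c d : ℝ, c < -1 ∧ 1 < d ∧ AnalyticOnNhd ℝ φ (Ioo c d)) ∧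
      (∀ r ∈ Icc (-1 : ℝ) 1, r ≠ 0 → φ r =
        2 * (r / (-(deriv Z r) * Phat.eval (Z r))) ^ (1 / ((m : ℝ) + 1)) * Z r) ∧
      (∀ r ∈ Icc (-1 : ℝ) 1, φ (-r) = φ r) ∧
      (∀ r ∈ Ioo (-1 : ℝ) 1, 0 < φ r) ∧
      φ 1 = 0 ∧
      (∀ r ∈ Icc (-1 : ℝ) 1,
        ((m : ℝ) + 1) * r * Z r * deriv φ r + ((m : ℝ) + 1 - 2 * Z r) * φ r = 0) ∧
      deriv φ 1 = -2 := by
  obtain ⟨c₀, d₀, hc₀, hd₀, hZa⟩ := hZan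
  have hsub : Icc (-1 : ℝ) 1 ⊆ Ioo c₀ d₀ := Icc_subset_Ioo hc₀ hd₀
  have hZd : ∀ r ∈ Icc (-1 : ℝ) 1, HasDerivAt Z (deriv Z r) r := fun r hr =>
    (hZa r (hsub hr)).differentiableAt.hasDerivAt
  have hPhat_eq := eval_eq_prod_one_sub_mul_of_reflect _ (hP ▸ hPhat)
  have hPpos : ∀ r ∈ Icc (-1 : ℝ) 1, 0 < Phat.eval (Z r) := fun r hr => by
    rw [hPhat_eq]
    exact prod_one_sub_pos hlt (by positivity)
      (mapsTo_Icc_of_mem_Ioo (by positivity) hZ1 hZeven hZ0 hZrange hr)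
  set h := slopeWeight Phat Z
  have hhan : AnalyticOnNhd ℝ h (Ioo c₀ d₀) := hZa.slopeWeight (hsub ⟨by norm_num, by norm_num⟩)
  have hhpos : ∀ r ∈ Icc (-1 : ℝ) 1, 0 < h r := fun r =>
    slopeWeight_pos hZ'0 hODE hZeven hZ' hZ''0 hPpos
  have hh1 : h 1 = 1 := by
    simp [h, slopeWeight_of_ne_zero hZ'0 one_ne_zero, hZ'1, hZ1, hPhat_eq]
  obtain ⟨c, hc, d, hd, hcd⟩ := exists_Ioo_subset_of_Icc_subset
    (hhan.continuousOn.isOpen_inter_preimage isOpen_Ioo isOpen_Ioi) (by norm_num)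
    fun r hr => ⟨hsub hr, hhpos r hr⟩
  refine ⟨fun r => 2 * (h r)⁻¹ ^ (1 / ((m : ℝ) + 1)) * Z r, ⟨c, d, hc, hd, fun r hr => ?_⟩,
    fun r _ hr0 => ?_, fun r hr => ?_, fun r hr => ?_, by simp [hZ1], fun r hr => ?_, ?_⟩
  · obtain ⟨hr₀, hpos⟩ := hcd hr
    exact (analyticAt_const.mul (((hhan r hr₀).inv hpos.ne').rpow_const _ (inv_pos.2 hpos))).mul
      (hZa r hr₀)
  · dsimp only [h]
    rw [slopeWeight_of_ne_zero hZ'0 hr0, inv_div]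
  · simp only [h, slopeWeight_neg hZ'0 hODE hZeven hr, hZeven r hr]
  · have hZr : 0 < Z r := by
      rcases eq_or_ne r 0 with rfl | hr0
      · rw [hZ0]; positivity
      · exact (hZrange r hr hr0).1
    have := hhpos r (Ioo_subset_Icc_self hr)
    positivity
  · exact slopeWeight_ode (by omega) hQder hPhat hQhat hODE hZ1 hZeven hZ0 hZ'0 hr (hZd r hr)
      (hhpos r hr)
  · have h1 : (1 : ℝ) ∈ Icc (-1) 1 := ⟨by norm_num, le_rfl⟩
    rw [deriv_two_mul_inv_rpow_mul_of_eq_zero (hhan 1 (hsub h1)).differentiableAt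
      (hZd 1 h1).differentiableAt (hhpos 1 h1) hZ1, hh1, hZ'1]
    norm_num

/-- Proposition 3.8 (2) of the paper: the function
r ↦ 2·(r/(−Z'·P̂(Z)))^{1/(m+1)}·Z(r) on [−1,1] \ {0} extends to a real analytic
even function φ on an open interval containing [−1,1], positive on (−1,1),
vanishing at 1, satisfying the first-order ODE, with φ'(1) = −2. -/
theorem stmt_13 (m : ℕ) (hm : 2 ≤ m)
    (lam : Fin (m - 1) → ℝ) (hmono : Monotone lam) (hlt : ∀ i, lam i < 1)
    (P Q Phat Qhat : Polynomial ℝ)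
    (hP : P = ∏ i : Fin (m - 1), (X - C (2 * lam i / ((m : ℝ) + 1))))
    (hQder : ∀ y : ℝ, (derivative Q).eval y = ((m : ℝ) + 1) * y * P.eval y)
    (hQval : Q.eval (2 / ((m : ℝ) + 1)) = 0)
    (hPhat : ∀ x : ℝ, x ≠ 0 → Phat.eval x = x ^ (m - 1) * P.eval (1 / x))
    (hQhat : ∀ x : ℝ, x ≠ 0 → Qhat.eval x = x ^ (m + 1) * Q.eval (1 / x))
    (Z : ℝ → ℝ)
    (hZan : ∃ c d : ℝ, c < -1 ∧ 1 < d ∧ AnalyticOnNhd ℝ Z (Ioo c d))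
    (hODE : ∀ r ∈ Icc (-1 : ℝ) 1,
      r * deriv Z r * Phat.eval (Z r) + Qhat.eval (Z r) = 0)
    (hZ1 : Z 1 = 0)
    (hZeven : ∀ r ∈ Icc (-1 : ℝ) 1, Z (-r) = Z r)
    (hZ0 : Z 0 = ((m : ℝ) + 1) / 2)
    (hZ'0 : deriv Z 0 = 0)
    (hZ' : ∀ r ∈ Ioc (0 : ℝ) 1, deriv Z r < 0)
    (hZ'1 : deriv Z 1 = -1)
    (hZ''0 : deriv (deriv Z) 0 < 0)
    (hZrange : ∀ r ∈ Ioo (-1 : ℝ) 1, r ≠ 0 → Z r ∈ Ioo (0 : ℝ) (((m : ℝ) + 1) / 2)) :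
    ∃ φ : ℝ → ℝ,
      (∃ c d : ℝ, c < -1 ∧ 1 < d ∧ AnalyticOnNhd ℝ φ (Ioo c d)) ∧
      (∀ r ∈ Icc (-1 : ℝ) 1, r ≠ 0 → φ r =
        2 * (r / (-(deriv Z r) * Phat.eval (Z r))) ^ (1 / ((m : ℝ) + 1)) * Z r) ∧
      (∀ r ∈ Icc (-1 : ℝ) 1, φ (-r) = φ r) ∧
      (∀ r ∈ Ioo (-1 : ℝ) 1, 0 < φ r) ∧
      φ 1 = 0 ∧
      (∀ r ∈ Icc (-1 : ℝ) 1,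
        ((m : ℝ) + 1) * r * Z r * deriv φ r + ((m : ℝ) + 1 - 2 * Z r) * φ r = 0) ∧
      deriv φ 1 = -2 :=
  stmt_13_general m hm lam hlt P Q Phat Qhat hP hQder hPhat hQhat Z hZan hODE hZ1 hZeven hZ0 hZ'0
    hZ' hZ'1 hZ''0 hZrange
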